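/- Let p, q, r, m be natural numbers and let A ∈ ℝ^{p×m}, B ∈ ℝ^{q×m}, C ∈ ℝ^{r×m} be real matrices with the same number m of columns. Then the vertically stacked matrix [A; B; C] ∈ ℝ^{(p+q+r)×m} satisfies ‖[A; B; C]‖_* ≤ ‖[A; C]‖_* + ‖[B; C]‖_*, where [A; C] ∈ ℝ^{(p+r)×m} and [B; C] ∈ ℝ^{(q+r)×m} are the corresponding vertical stackings. -/

import Mathlib

/-- The positive semidefinite square root of a positive semidefinite matrix
(the former `Matrix.PosSemidef.sqrt`, spelled out with its old definition). -/
noncomputable def Matrix.PosSemidef.sqrt {n : Type*} [Fintype n] [DecidableEq n]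
    {A : Matrix n n ℝ} (hA : A.PosSemidef) : Matrix n n ℝ :=
  (hA.1.eigenvectorUnitary : Matrix n n ℝ) *
    Matrix.diagonal (fun i => Real.sqrt (hA.1.eigenvalues i)) *
    (star hA.1.eigenvectorUnitary : Matrix n n ℝ)

/-- The nuclear norm of a real matrix `M`: the trace of the positive
semidefinite square root of `Mᵀ * M`. -/
noncomputable def nuclearNorm {m n : Type*} [Fintype m] [Fintype n] [DecidableEq n]
    (M : Matrix m n ℝ) : ℝ :=
  (Matrix.posSemidef_conjTranspose_mul_self M).sqrt.trace

/-!
With `X = AᴴA`, `Y = BᴴB`, `Z = CᴴC` the claim reads `tr √(X + Y + Z) ≤ tr √(X + Z) + tr √(Y + Z)`,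
an instance of `tr √S ≤ tr √P + tr √Q` for `0 ≤ S ≤ P + Q`. The latter comes from the variational
description `2 tr W = inf_{T > 0} (tr (W T⁻¹ W) + tr T)` for `W ≥ 0`: the inequality `≥` is the
positivity of the Gram matrix of `W T^{-1/2} - T^{1/2}`, and `tr (W T⁻¹ W) ≤ tr W` as soon as
`W ≤ T`. Testing with `T = √P + √Q + δ` gives
`2 tr √S ≤ tr (S T⁻¹) + tr T ≤ tr (P T⁻¹) + tr (Q T⁻¹) + tr T ≤ 2 (tr √P + tr √Q) + δ n`,
and `δ → 0`.
-/

open scoped MatrixOrder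
open Matrix

theorem mul_self_le_self_of_nonneg_of_le_one {R : Type*} [Ring R] [PartialOrder R] [StarRing R]
    [StarOrderedRing R] {c : R} (h0 : 0 ≤ c) (h1 : c ≤ 1) : c * c ≤ c := by
  have hc : star c = c := (IsSelfAdjoint.of_nonneg h0).star_eq
  have key : c - c * c = star (1 - c) * c * (1 - c) + star c * (1 - c) * c := by
    rw [star_sub, star_one, hc]
    noncomm_ring
  rw [← sub_nonneg, key]
  exact add_nonneg (star_left_conjugate_nonneg h0 _)
    (star_left_conjugate_nonneg (sub_nonneg.mpr h1) _)

theorem Matrix.PosSemidef.sqrt_eq_cfcSqrt {n : Type*} [Fintype n] [DecidableEq n]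
    {A : Matrix n n ℝ} (hA : A.PosSemidef) : hA.sqrt = CFC.sqrt A := by
  rw [CFC.sqrt_eq_real_sqrt A hA.nonneg, cfcₙ_eq_cfc, hA.1.cfc_eq]
  rfl

theorem nuclearNorm_eq_trace_sqrt {m n : Type*} [Fintype m] [Fintype n] [DecidableEq n]
    (M : Matrix m n ℝ) : nuclearNorm M = (CFC.sqrt (Mᴴ * M)).trace := by
  rw [nuclearNorm, PosSemidef.sqrt_eq_cfcSqrt]

theorem Matrix.conjTranspose_fromRows_mul_fromRows {R m₁ m₂ n : Type*} [Fintype m₁] [Fintype m₂]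
    [Semiring R] [Star R] (A₁ : Matrix m₁ n R) (A₂ : Matrix m₂ n R) :
    (fromRows A₁ A₂)ᴴ * fromRows A₁ A₂ = A₁ᴴ * A₁ + A₂ᴴ * A₂ := by
  rw [conjTranspose_fromRows_eq_fromCols_conjTranspose, fromCols_mul_fromRows]

namespace Matrix

variable {n : Type*} [Fintype n] [DecidableEq n]

theorem trace_mul_nonneg {M N : Matrix n n ℝ} (hM : 0 ≤ M) (hN : 0 ≤ N) :
    0 ≤ (M * N).trace := by
  have h : (M * N).trace = (star (CFC.sqrt N) * M * CFC.sqrt N).trace := by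
    rw [(CFC.sqrt_nonneg N).star_eq, trace_mul_cycle, CFC.sqrt_mul_sqrt_self N, trace_mul_comm]
  exact h ▸ (star_left_conjugate_nonneg hM _).posSemidef.trace_nonneg

theorem trace_sqrt_mul_mul_sqrt {X : Matrix n n ℝ} (hX : 0 ≤ X) (M : Matrix n n ℝ) :
    (CFC.sqrt X * M * CFC.sqrt X).trace = (X * M).trace := by
  rw [trace_mul_cycle, CFC.sqrt_mul_sqrt_self X hX]

theorem PosDef.exists_sqrt_and_inv_sqrt {T : Matrix n n ℝ} (hT : T.PosDef) :
    ∃ S R : Matrix n n ℝ,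
      Sᴴ = S ∧ Rᴴ = R ∧ S * S = T ∧ R * R = T⁻¹ ∧ R * S = 1 ∧ S * R = 1 := by
  have hdet := (isUnit_iff_isUnit_det _).mp
    ((CFC.isUnit_sqrt_iff T hT.posSemidef.nonneg).mpr hT.isUnit)
  have hSS : CFC.sqrt T * CFC.sqrt T = T := CFC.sqrt_mul_sqrt_self T hT.posSemidef.nonneg
  have hSH : (CFC.sqrt T)ᴴ = CFC.sqrt T := (CFC.sqrt_nonneg T).posSemidef.isHermitian.eq
  exact ⟨CFC.sqrt T, (CFC.sqrt T)⁻¹, hSH, by rw [conjTranspose_nonsing_inv, hSH], hSS,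
    by rw [← mul_inv_rev, hSS], nonsing_inv_mul _ hdet, mul_nonsing_inv _ hdet⟩

theorem two_mul_trace_le_trace_mul_inv_mul_add_trace {W T : Matrix n n ℝ} (hW : W.IsHermitian)
    (hT : T.PosDef) : 2 * W.trace ≤ (W * T⁻¹ * W).trace + T.trace := by
  obtain ⟨S, R, hSH, hRH, hSS, hRR, hRS, hSR⟩ := hT.exists_sqrt_and_inv_sqrt
  have hgram : (W * R - S) * (W * R - S)ᴴ = W * T⁻¹ * W - W - W + T := by
    rw [conjTranspose_sub, conjTranspose_mul, hRH, hW.eq, hSH,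
      show (W * R - S) * (R * W - S) = W * (R * R) * W - W * (R * S) - S * R * W + S * S by
        noncomm_ring, hRR, hRS, hSR, hSS, mul_one, one_mul]
  have := (posSemidef_self_mul_conjTranspose (W * R - S)).trace_nonneg
  rw [hgram, trace_add, trace_sub, trace_sub] at this
  linarith

theorem trace_mul_inv_mul_le_trace_of_le {W T : Matrix n n ℝ} (hW : 0 ≤ W) (hWT : W ≤ T)
    (hT : T.PosDef) : (W * T⁻¹ * W).trace ≤ W.trace := by
  obtain ⟨S, R, hSH, hRH, hSS, hRR, hRS, hSR⟩ := hT.exists_sqrt_and_inv_sqrt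
  have hR : star R = R := hRH
  have hS : star S = S := hSH
  -- `C = T^{-1/2} W T^{-1/2}` lies between `0` and `1`, so `C² ≤ C`; conjugating back by
  -- `T^{1/2}` turns this into `W T⁻¹ W ≤ W`.
  set C := star R * W * R with hC
  have hC0 : 0 ≤ C := star_left_conjugate_nonneg hW R
  have hC1 : C ≤ 1 := by
    calc C ≤ star R * T * R := star_left_conjugate_le_conjugate hWT R
      _ = 1 := by rw [hR, ← hSS, ← mul_assoc R S S, hRS, one_mul, hSR]
  have hSC : S * C = W * R := by rw [hC, hR, ← mul_assoc, ← mul_assoc, hSR, one_mul]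
  have hCS : C * S = R * W := by rw [hC, hR, mul_assoc, hRS, mul_one]
  have key : star S * (C - C * C) * S = W - W * T⁻¹ * W := by
    rw [hS, show S * (C - C * C) * S = S * C * S - (S * C) * (C * S) by noncomm_ring, hSC, hCS,
      mul_assoc, hRS, mul_one, ← hRR]
    noncomm_ring
  have := (star_left_conjugate_nonneg
    (sub_nonneg.mpr (mul_self_le_self_of_nonneg_of_le_one hC0 hC1)) S).posSemidef.trace_nonneg
  rw [key, trace_sub] at this
  linarith

theorem trace_sqrt_le_add_of_le_add {P Q S : Matrix n n ℝ} (hP : 0 ≤ P) (hQ : 0 ≤ Q)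
    (hS : 0 ≤ S) (h : S ≤ P + Q) :
    (CFC.sqrt S).trace ≤ (CFC.sqrt P).trace + (CFC.sqrt Q).trace := by
  have key : ∀ δ : ℝ, 0 < δ → 2 * (CFC.sqrt S).trace ≤
      2 * ((CFC.sqrt P).trace + (CFC.sqrt Q).trace) + δ * Fintype.card n := by
    intro δ hδ
    set T := CFC.sqrt P + CFC.sqrt Q + δ • 1
    have hδ1 : (δ • 1 : Matrix n n ℝ).PosDef := PosDef.one.smul hδ
    have hT : T.PosDef :=
      PosDef.posSemidef_add (add_nonneg (CFC.sqrt_nonneg P) (CFC.sqrt_nonneg Q)).posSemidef hδ1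
    have hTP : CFC.sqrt P ≤ T := (le_add_of_nonneg_right (CFC.sqrt_nonneg Q)).trans
      (le_add_of_nonneg_right hδ1.posSemidef.nonneg)
    have hTQ : CFC.sqrt Q ≤ T := (le_add_of_nonneg_left (CFC.sqrt_nonneg P)).trans
      (le_add_of_nonneg_right hδ1.posSemidef.nonneg)
    calc 2 * (CFC.sqrt S).trace
        ≤ (CFC.sqrt S * T⁻¹ * CFC.sqrt S).trace + T.trace :=
          two_mul_trace_le_trace_mul_inv_mul_add_trace
            (CFC.sqrt_nonneg S).posSemidef.isHermitian hT
      _ = (S * T⁻¹).trace + T.trace := by rw [trace_sqrt_mul_mul_sqrt hS]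
      _ ≤ ((P + Q) * T⁻¹).trace + T.trace := by
          have := trace_mul_nonneg (sub_nonneg.mpr h) hT.inv.posSemidef.nonneg
          rw [sub_mul, trace_sub] at this
          linarith
      _ = (CFC.sqrt P * T⁻¹ * CFC.sqrt P).trace + (CFC.sqrt Q * T⁻¹ * CFC.sqrt Q).trace
            + T.trace := by
          rw [trace_sqrt_mul_mul_sqrt hP, trace_sqrt_mul_mul_sqrt hQ, add_mul, trace_add]
      _ ≤ (CFC.sqrt P).trace + (CFC.sqrt Q).trace + T.trace := by
          gcongr
          · exact trace_mul_inv_mul_le_trace_of_le (CFC.sqrt_nonneg P) hTP hT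
          · exact trace_mul_inv_mul_le_trace_of_le (CFC.sqrt_nonneg Q) hTQ hT
      _ = 2 * ((CFC.sqrt P).trace + (CFC.sqrt Q).trace) + δ * Fintype.card n := by
          simp only [T, trace_add, trace_smul, trace_one, smul_eq_mul]
          ring
  refine le_of_forall_pos_le_add fun ε hε => ?_
  have hδε : ε / (Fintype.card n + 1) * Fintype.card n ≤ ε := by
    rw [div_mul_eq_mul_div, div_le_iff₀ (by positivity)]
    nlinarith
  linarith [key (ε / (Fintype.card n + 1)) (by positivity)]

end Matrix

theorem nuclearNorm_fromRows_triple_le (p q r m : ℕ)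
    (A : Matrix (Fin p) (Fin m) ℝ) (B : Matrix (Fin q) (Fin m) ℝ)
    (C : Matrix (Fin r) (Fin m) ℝ) :
    nuclearNorm (Matrix.fromRows A (Matrix.fromRows B C)) ≤
      nuclearNorm (Matrix.fromRows A C) + nuclearNorm (Matrix.fromRows B C) := by
  simp only [nuclearNorm_eq_trace_sqrt, conjTranspose_fromRows_mul_fromRows]
  have hA := (posSemidef_conjTranspose_mul_self A).nonneg
  have hB := (posSemidef_conjTranspose_mul_self B).nonneg
  have hC := (posSemidef_conjTranspose_mul_self C).nonneg
  refine trace_sqrt_le_add_of_le_add (add_nonneg hA hC) (add_nonneg hB hC)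
    (add_nonneg hA (add_nonneg hB hC)) ?_
  rw [show Aᴴ * A + Cᴴ * C + (Bᴴ * B + Cᴴ * C) = Aᴴ * A + (Bᴴ * B + Cᴴ * C) + Cᴴ * C by abel]
  exact le_add_of_nonneg_right hC
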